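/- Let $R$ be a Noetherian ring, $I$ an ideal, $M$ an $I$-filtered module, and $x \in I^m$ a superficial element of order $m$ for $M$. Then there exists $N$ such that for all $n \geq N$ the sequence $0 \to M/((0:_M x) + M_{n-m}) \xrightarrow{x} M/M_n \to M/(M_n + xM) \to 0$, where the first map is induced by multiplication by $x$, is exact. -/

import Mathlib

universe u

variable {R M : Type u} [CommRing R] [AddCommGroup M] [Module R M]

/-- The map `M/((0 :_M x) + M_{n-m}) → M/Mₙ` induced by multiplication by `x ∈ Iᵐ`. -/
noncomputable def mulByQuotient {I : Ideal R} (F : I.Filtration M) (m : ℕ) (x : R)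
    (hx : x ∈ I ^ m) (n : ℕ) :
    (M ⧸ (LinearMap.ker (LinearMap.lsmul R M x) ⊔ F.N (n - m))) →ₗ[R] M ⧸ F.N n :=
  Submodule.liftQ _ ((F.N n).mkQ ∘ₗ LinearMap.lsmul R M x) <| by
    refine sup_le (fun y hy => ?_) (fun y hy => ?_)
    · simp only [LinearMap.mem_ker] at hy ⊢
      simp [LinearMap.comp_apply, hy]
    · simp only [LinearMap.mem_ker, LinearMap.comp_apply, Submodule.mkQ_apply,
        Submodule.Quotient.mk_eq_zero]
      refine F.antitone (show n ≤ m + (n - m) from le_add_tsub) ?_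
      exact Ideal.Filtration.pow_smul_le F m (n - m) (Submodule.smul_mem_smul hx hy)

/-- The canonical projection `M/Mₙ → M/(Mₙ + xM)`. -/
noncomputable def projQuotient {I : Ideal R} (F : I.Filtration M) (x : R) (n : ℕ) :
    (M ⧸ F.N n) →ₗ[R] M ⧸ (F.N n ⊔ LinearMap.range (LinearMap.lsmul R M x)) :=
  Submodule.mapQ _ _ LinearMap.id <| by simp

/-
Exactness in the middle and at the right end holds for every `n`; the content is injectivity,
i.e. `x • y ∈ Mₙ → y ∈ (0 :_M x) + M_{n-m}` for large `n`. By Artin–Rees for the stable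
filtration `F` and the submodule `xM`, there is `k` with `Mₙ ∩ xM ⊆ x Iⁿ⁻ᵏ M ⊆ x M_{n-k}`,
so `x • y = x • z` with `z ∈ M_{n-k} ⊆ M_c`. Then `x • z ∈ Mₙ`, and superficiality puts `z`
in `M_{n-m}`, while `y - z` is killed by `x`.
-/

namespace Ideal.Filtration

variable {I : Ideal R} (F : I.Filtration M)

theorem pow_smul_top_le (hF0 : F.N 0 = ⊤) (k : ℕ) : I ^ k • (⊤ : Submodule R M) ≤ F.N k := by
  simpa [hF0] using F.pow_smul_le k 0

variable {F}

theorem Stable.exists_inf_eq_pow_smul [IsNoetherianRing R] [Module.Finite R M] (hF : F.Stable)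
    (N : Submodule R M) : ∃ k, ∀ n ≥ k, F.N n ⊓ N = I ^ (n - k) • (F.N k ⊓ N) :=
  (hF.inter_right (I.trivialFiltration N)).exists_pow_smul_eq_of_ge

theorem Stable.exists_smul_eq_smul_of_smul_mem [IsNoetherianRing R] [Module.Finite R M]
    (hF : F.Stable) (hF0 : F.N 0 = ⊤) (x : R) :
    ∃ k, ∀ n ≥ k, ∀ y : M, x • y ∈ F.N n → ∃ z ∈ F.N (n - k), x • z = x • y := by
  obtain ⟨k, hk⟩ := hF.exists_inf_eq_pow_smul (LinearMap.range (LinearMap.lsmul R M x))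
  refine ⟨k, fun n hn y hy => ?_⟩
  have hle : F.N n ⊓ LinearMap.range (LinearMap.lsmul R M x) ≤
      (I ^ (n - k) • (⊤ : Submodule R M)).map (LinearMap.lsmul R M x) := by
    rw [hk n hn, Submodule.map_smul'', Submodule.map_top]
    exact Submodule.smul_mono le_rfl inf_le_right
  obtain ⟨z, hz, hxz⟩ := hle ⟨hy, y, rfl⟩
  exact ⟨z, F.pow_smul_top_le hF0 _ hz, hxz⟩

end Ideal.Filtration

section ExactSequence

variable {I : Ideal R} (F : I.Filtration M) (m : ℕ) (x : R) (hx : x ∈ I ^ m) (n : ℕ)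

@[simp]
theorem projQuotient_mk (y : M) :
    projQuotient F x n (Submodule.Quotient.mk y) = Submodule.Quotient.mk y :=
  rfl

theorem projQuotient_surjective : Function.Surjective (projQuotient F x n) :=
  Submodule.factor_surjective _

theorem exact_mulByQuotient_projQuotient :
    Function.Exact (mulByQuotient F m x hx n) (projQuotient F x n) := by
  intro b
  obtain ⟨y, rfl⟩ := Submodule.Quotient.mk_surjective _ b
  have hrange : Submodule.Quotient.mk y ∈ Set.range (mulByQuotient F m x hx n) ↔
      ∃ w : M, -(x • w) + y ∈ F.N n := by
    constructor
    · rintro ⟨a, ha⟩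
      obtain ⟨w, rfl⟩ := Submodule.Quotient.mk_surjective _ a
      exact ⟨w, (Submodule.Quotient.eq' _).mp ha⟩
    · rintro ⟨w, hw⟩
      exact ⟨Submodule.Quotient.mk w, (Submodule.Quotient.eq' _).mpr hw⟩
  rw [hrange, projQuotient_mk, Submodule.Quotient.mk_eq_zero, Submodule.mem_sup]
  constructor
  · rintro ⟨u, hu, _, ⟨w, rfl⟩, rfl⟩
    exact ⟨w, by simpa using hu⟩
  · rintro ⟨w, hw⟩
    exact ⟨_, hw, x • w, ⟨w, rfl⟩, by simp⟩

theorem mulByQuotient_injective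
    (h : ∀ y : M, x • y ∈ F.N n → ∃ z ∈ F.N (n - m), x • z = x • y) :
    Function.Injective (mulByQuotient F m x hx n) := by
  rw [← LinearMap.ker_eq_bot]
  refine Submodule.ker_liftQ_eq_bot _ _ _ fun y hy => ?_
  obtain ⟨z, hz, hxz⟩ := h y ((Submodule.Quotient.mk_eq_zero _).mp hy)
  have hker : y - z ∈ LinearMap.ker (LinearMap.lsmul R M x) := by
    simp [smul_sub, hxz]
  simpa using Submodule.add_mem_sup hker hz

end ExactSequence

theorem superficial_exact_sequence_general [IsNoetherianRing R] [Module.Finite R M]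
    (I : Ideal R) (F : I.Filtration M) (hF0 : F.N 0 = ⊤) (hFG : F.submodule.FG)
    (m : ℕ) (x : R) (hx : x ∈ I ^ m) (c : ℕ)
    (hsup : ∀ n : ℕ, c ≤ n →
      Submodule.comap (LinearMap.lsmul R M x) (F.N (n + m)) ⊓ F.N c = F.N n) :
    ∃ N₀ : ℕ, ∀ n : ℕ, N₀ ≤ n →
      Function.Injective (mulByQuotient F m x hx n) ∧
      Function.Exact (mulByQuotient F m x hx n) (projQuotient F x n) ∧
      Function.Surjective (projQuotient F x n) := by
  have hF : F.Stable := (F.submodule_fg_iff_stable fun _ => IsNoetherian.noetherian _).mp hFG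
  obtain ⟨k, hk⟩ := hF.exists_smul_eq_smul_of_smul_mem hF0 x
  refine ⟨k + c + m, fun n hn => ⟨mulByQuotient_injective F m x hx n fun y hy => ?_,
    exact_mulByQuotient_projQuotient F m x hx n, projQuotient_surjective F x n⟩⟩
  obtain ⟨z, hz, hxz⟩ := hk n (by omega) y hy
  refine ⟨z, ?_, hxz⟩
  rw [← hsup (n - m) (by omega)]
  refine ⟨?_, F.antitone (by omega) hz⟩
  change x • z ∈ F.N (n - m + m)
  rwa [Nat.sub_add_cancel (by omega), hxz]

/-- Let `R` be Noetherian, `I` an ideal, `M` an `I`-filtered module,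
and `x ∈ Iᵐ` a superficial element of order `m` for `M`.  Then there is `N₀` such that
for all `n ≥ N₀` the sequence
`0 → M/((0 :_M x) + M_{n-m}) → M/Mₙ → M/(Mₙ + xM) → 0`,
where the first map is induced by multiplication by `x` and the second is the canonical
projection, is exact. -/
theorem superficial_exact_sequence [IsNoetherianRing R] [Module.Finite R M]
    (I : Ideal R) (F : I.Filtration M) (hF0 : F.N 0 = ⊤) (hFG : F.submodule.FG)
    (m : ℕ) (hm : 1 ≤ m) (x : R) (hx : x ∈ I ^ m) (c : ℕ)
    (hsup : ∀ n : ℕ, c ≤ n →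
      Submodule.comap (LinearMap.lsmul R M x) (F.N (n + m)) ⊓ F.N c = F.N n) :
    ∃ N₀ : ℕ, ∀ n : ℕ, N₀ ≤ n →
      Function.Injective (mulByQuotient F m x hx n) ∧
      Function.Exact (mulByQuotient F m x hx n) (projQuotient F x n) ∧
      Function.Surjective (projQuotient F x n) :=
  superficial_exact_sequence_general I F hF0 hFG m x hx c hsup
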